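/- arXiv:2109.03992 — 2 statements merged into one kernel-verified Lean document; each statement's English description precedes it below -/
import Mathlib

section
/- Let d be a positive integer, let ρ be a probability measure on ℝ × ℝ^d, and let f : [0,1]^d → ℝ satisfy f(x) = ∫ c·σ̇(wᵀx) dρ(c,w) for all x ∈ [0,1]^d, with the integrand integrable. Suppose V := ∫ |c|·‖w‖₁³ dρ(c,w) is finite and strictly positive. Then there exists a probability measure ρ′ on ℝ × ℝ^d, supported on the set {−V, V} × {w ∈ ℝ^d : ‖w‖₁ = 1}, such that f(x) = ∫ c·σ̇(wᵀx) dρ′(c,w) for all x ∈ [0,1]^d and ∫ |c|·‖w‖₁³ dρ′(c,w) = V. -/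
/-!
The factor `|c| ‖w‖₁³ / V` is a probability density with respect to `ρ`. Degree-3 homogeneity
of `σ̇` gives `c σ̇(wᵀx) = (|c| ‖w‖₁³ / V) · (± V) σ̇((w / ‖w‖₁)ᵀx)` whenever `w ≠ 0`, with the
sign of `c`; so pushing the reweighted measure forward along `(c, w) ↦ (± V, w / ‖w‖₁)` keeps
both the represented function and the Barron integral.
-/

open MeasureTheory

noncomputable section

/-- The ReLU³ activation function `σ̇(t) = max(0, t³/6)`. -/
def relu3 (t : ℝ) : ℝ := max 0 (t ^ 3 / 6)

/-- The unit cube `[0,1]^d` in `ℝ^d`. -/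
def cube (d : ℕ) : Set (Fin d → ℝ) := Set.Icc 0 1

section WithDensity

variable {α β : Type*} [MeasurableSpace α] [MeasurableSpace β] {μ : Measure α} {g : α → ℝ}

lemma isProbabilityMeasure_withDensity_ofReal (hg_int : Integrable g μ) (hg_nonneg : 0 ≤ᵐ[μ] g)
    (hg_one : ∫ a, g a ∂μ = 1) :
    IsProbabilityMeasure (μ.withDensity fun a => ENNReal.ofReal (g a)) := by
  constructor
  rw [withDensity_apply _ MeasurableSet.univ, Measure.restrict_univ,
    ← ofReal_integral_eq_lintegral_ofReal hg_int hg_nonneg, hg_one, ENNReal.ofReal_one]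

lemma integral_map_withDensity_ofReal (hg : Measurable g) (hg_nonneg : 0 ≤ᵐ[μ] g)
    {T : α → β} (hT : Measurable T) {F : β → ℝ} (hF : Measurable F) :
    ∫ b, F b ∂(μ.withDensity fun a => ENNReal.ofReal (g a)).map T = ∫ a, g a * F (T a) ∂μ := by
  rw [integral_map hT.aemeasurable hF.aestronglyMeasurable,
    integral_withDensity_eq_integral_toReal_smul hg.ennreal_ofReal
      (ae_of_all _ fun _ => ENNReal.ofReal_lt_top)]
  refine integral_congr_ae (hg_nonneg.mono fun a (ha : 0 ≤ g a) => ?_)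
  dsimp only
  rw [ENNReal.toReal_ofReal ha, smul_eq_mul]

lemma ae_map_withDensity_ofReal (hg : Measurable g) {T : α → β} (hT : Measurable T)
    {P : β → Prop} (hP : MeasurableSet {b | P b}) (h : ∀ a, 0 < g a → P (T a)) :
    ∀ᵐ b ∂(μ.withDensity fun a => ENNReal.ofReal (g a)).map T, P b := by
  rw [ae_map_iff hT.aemeasurable hP, ae_withDensity_iff hg.ennreal_ofReal]
  exact ae_of_all _ fun a ha => h a (ENNReal.ofReal_pos.1 (pos_iff_ne_zero.2 ha))

end WithDensity

lemma relu3_mul_of_nonneg {s : ℝ} (hs : 0 ≤ s) (t : ℝ) : relu3 (s * t) = s ^ 3 * relu3 t := by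
  unfold relu3
  rw [mul_max_of_nonneg _ _ (by positivity), mul_zero]
  ring_nf

lemma abs_mul_ite_neg (c V : ℝ) : |c| * (if c < 0 then -V else V) = c * V := by
  split_ifs with hc
  · rw [abs_of_neg hc]; ring
  · rw [abs_of_nonneg (not_lt.1 hc)]

section Normalization

variable {ι : Type*} [Fintype ι]

lemma sum_abs_smul (a : ℝ) (w : ι → ℝ) : ∑ i, |(a • w) i| = |a| * ∑ i, |w i| := by
  simp only [Pi.smul_apply, smul_eq_mul, abs_mul, Finset.mul_sum]

lemma sum_abs_eq_zero_iff {w : ι → ℝ} : ∑ i, |w i| = 0 ↔ w = 0 := by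
  rw [Finset.sum_eq_zero_iff_of_nonneg fun i _ => abs_nonneg _, funext_iff]
  simp

/-- At `w = 0` the junk value `0⁻¹ = 0` is harmless, since `barronDensity` vanishes there. -/
def normalizeNeuron (V : ℝ) (p : ℝ × (ι → ℝ)) : ℝ × (ι → ℝ) :=
  (if p.1 < 0 then -V else V, (∑ i, |p.2 i|)⁻¹ • p.2)

def barronDensity (V : ℝ) (p : ℝ × (ι → ℝ)) : ℝ := |p.1| * (∑ i, |p.2 i|) ^ 3 / V

variable {V : ℝ}

lemma measurable_normalizeNeuron : Measurable (normalizeNeuron (ι := ι) V) :=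
  (Measurable.ite (measurableSet_lt measurable_fst measurable_const) measurable_const
    measurable_const).prodMk (by fun_prop)

lemma measurable_barronDensity : Measurable (barronDensity (ι := ι) V) := by
  unfold barronDensity; fun_prop

lemma barronDensity_nonneg (hV : 0 ≤ V) (p : ℝ × (ι → ℝ)) : 0 ≤ barronDensity V p := by
  unfold barronDensity; positivity

lemma barronDensity_of_sum_abs_eq_zero {p : ℝ × (ι → ℝ)} (hp : ∑ i, |p.2 i| = 0) :
    barronDensity V p = 0 := by
  simp [barronDensity, hp]

lemma normalizeNeuron_fst_eq_or (p : ℝ × (ι → ℝ)) :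
    (normalizeNeuron V p).1 = V ∨ (normalizeNeuron V p).1 = -V := by
  unfold normalizeNeuron; split_ifs <;> simp

lemma sum_abs_normalizeNeuron_snd {p : ℝ × (ι → ℝ)} (hp : ∑ i, |p.2 i| ≠ 0) :
    ∑ i, |(normalizeNeuron V p).2 i| = 1 := by
  rw [normalizeNeuron, sum_abs_smul, abs_inv, abs_of_nonneg (by positivity), inv_mul_cancel₀ hp]

lemma barronDensity_mul_neuron (hV : V ≠ 0) (x : ι → ℝ) (p : ℝ × (ι → ℝ)) :
    barronDensity V p * ((normalizeNeuron V p).1 * relu3 (∑ i, (normalizeNeuron V p).2 i * x i))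
      = p.1 * relu3 (∑ i, p.2 i * x i) := by
  by_cases hp : ∑ i, |p.2 i| = 0
  · simp [barronDensity_of_sum_abs_eq_zero hp, sum_abs_eq_zero_iff.1 hp, relu3]
  have hsum : ∑ i, (normalizeNeuron V p).2 i * x i = (∑ i, |p.2 i|)⁻¹ * ∑ i, p.2 i * x i := by
    simp only [normalizeNeuron, Pi.smul_apply, smul_eq_mul, Finset.mul_sum, mul_assoc]
  rw [hsum, relu3_mul_of_nonneg (by positivity), barronDensity]
  calc |p.1| * (∑ i, |p.2 i|) ^ 3 / V * ((normalizeNeuron V p).1 *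
        ((∑ i, |p.2 i|)⁻¹ ^ 3 * relu3 (∑ i, p.2 i * x i)))
      = |p.1| * (normalizeNeuron V p).1 / V * relu3 (∑ i, p.2 i * x i) := by
        field_simp
    _ = p.1 * relu3 (∑ i, p.2 i * x i) := by
        rw [normalizeNeuron, abs_mul_ite_neg, mul_div_cancel_right₀ _ hV]

lemma barronDensity_mul_barronIntegrand (hV : 0 < V) (p : ℝ × (ι → ℝ)) :
    barronDensity V p * (|(normalizeNeuron V p).1| * (∑ i, |(normalizeNeuron V p).2 i|) ^ 3)
      = |p.1| * (∑ i, |p.2 i|) ^ 3 := by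
  by_cases hp : ∑ i, |p.2 i| = 0
  · simp [barronDensity_of_sum_abs_eq_zero hp, hp]
  have habs : |(normalizeNeuron V p).1| = V := by
    rcases normalizeNeuron_fst_eq_or (V := V) p with h | h <;> simp [h, abs_of_pos hV]
  rw [habs, sum_abs_normalizeNeuron_snd hp, barronDensity]
  field_simp

end Normalization

theorem barron_rep_normalization_general
    (d : ℕ)
    (ρ : Measure (ℝ × (Fin d → ℝ)))
    (f : (Fin d → ℝ) → ℝ)
    (hrep : ∀ x ∈ cube d, f x = ∫ p, p.1 * relu3 (∑ i, p.2 i * x i) ∂ρ)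
    (V : ℝ) (hVdef : V = ∫ p, |p.1| * (∑ i, |p.2 i|) ^ 3 ∂ρ)
    (hVint : Integrable (fun p : ℝ × (Fin d → ℝ) => |p.1| * (∑ i, |p.2 i|) ^ 3) ρ)
    (hVpos : 0 < V) :
    ∃ ρ' : Measure (ℝ × (Fin d → ℝ)), IsProbabilityMeasure ρ' ∧
      (∀ᵐ p ∂ρ', (p.1 = V ∨ p.1 = -V) ∧ (∑ i, |p.2 i|) = 1) ∧
      (∀ x ∈ cube d, f x = ∫ p, p.1 * relu3 (∑ i, p.2 i * x i) ∂ρ') ∧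
      (∫ p, |p.1| * (∑ i, |p.2 i|) ^ 3 ∂ρ') = V := by
  have hg : Measurable (barronDensity (ι := Fin d) V) := measurable_barronDensity
  have hT : Measurable (normalizeNeuron (ι := Fin d) V) := measurable_normalizeNeuron
  have hg_nonneg : 0 ≤ᵐ[ρ] barronDensity V := ae_of_all _ (barronDensity_nonneg hVpos.le)
  have hg_one : ∫ p, barronDensity V p ∂ρ = 1 := by
    simp only [barronDensity, integral_div, ← hVdef, div_self hVpos.ne']
  have := isProbabilityMeasure_withDensity_ofReal (g := barronDensity V) (hVint.div_const V)
    hg_nonneg hg_one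
  refine ⟨(ρ.withDensity fun p => ENNReal.ofReal (barronDensity V p)).map (normalizeNeuron V),
    Measure.isProbabilityMeasure_map hT.aemeasurable, ?_, fun x hx => ?_, ?_⟩
  · refine ae_map_withDensity_ofReal hg hT (by measurability) fun p hp =>
      ⟨normalizeNeuron_fst_eq_or p, sum_abs_normalizeNeuron_snd fun h => ?_⟩
    exact hp.ne' (barronDensity_of_sum_abs_eq_zero h)
  · rw [hrep x hx, integral_map_withDensity_ofReal hg hg_nonneg hT (by unfold relu3; fun_prop)]
    simp_rw [barronDensity_mul_neuron hVpos.ne']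
  · rw [integral_map_withDensity_ofReal hg hg_nonneg hT (by fun_prop)]
    simp_rw [barronDensity_mul_barronIntegrand hVpos]
    exact hVdef.symm

/-- normalization of a ReLU³ Barron representing measure: any ReLU³
Barron representation of `f` with Barron integral `V > 0` can be replaced by one supported
on `{−V, V} × {‖w‖₁ = 1}` having the same Barron integral. -/
theorem barron_rep_normalization
    (d : ℕ) (hd : 0 < d)
    (ρ : Measure (ℝ × (Fin d → ℝ))) (hρ : IsProbabilityMeasure ρ)
    (f : (Fin d → ℝ) → ℝ)
    (hint : ∀ x ∈ cube d,
      Integrable (fun p : ℝ × (Fin d → ℝ) => p.1 * relu3 (∑ i, p.2 i * x i)) ρ)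
    (hrep : ∀ x ∈ cube d, f x = ∫ p, p.1 * relu3 (∑ i, p.2 i * x i) ∂ρ)
    (V : ℝ) (hVdef : V = ∫ p, |p.1| * (∑ i, |p.2 i|) ^ 3 ∂ρ)
    (hVint : Integrable (fun p : ℝ × (Fin d → ℝ) => |p.1| * (∑ i, |p.2 i|) ^ 3) ρ)
    (hVpos : 0 < V) :
    ∃ ρ' : Measure (ℝ × (Fin d → ℝ)), IsProbabilityMeasure ρ' ∧
      (∀ᵐ p ∂ρ', (p.1 = V ∨ p.1 = -V) ∧ (∑ i, |p.2 i|) = 1) ∧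
      (∀ x ∈ cube d, f x = ∫ p, p.1 * relu3 (∑ i, p.2 i * x i) ∂ρ') ∧
      (∫ p, |p.1| * (∑ i, |p.2 i|) ^ 3 ∂ρ') = V :=
  barron_rep_normalization_general d ρ f hrep V hVdef hVint hVpos

end
end

section
/- Let E be a measurable space, κ a Markov kernel on E, and π̂ a probability measure on E that is invariant for κ. Let π be a finite measure on E, let V : E → ℝ be measurable with V ≥ 1 and ∫ V dπ̂ < ∞, and let f : E → ℝ be measurable with |f(x)| ≤ V(x) for all x; assume f is integrable with respect to π, with respect to π̂, and with respect to κⁿ(x) for every n ∈ ℕ and x ∈ E. Suppose there are constants K > 0, ρ ∈ (0,1) and ε ≥ 0 such that for every n ∈ ℕ and every x ∈ E, | ∫ f dπ − ∫ f d(κⁿ(x)) | ≤ K·( ρⁿ + ε·(1 − ρⁿ)/(1 − ρ) )·V(x). Then | ∫ f dπ − ∫ f dπ̂ | ≤ (K·ε/(1 − ρ))·∫ V dπ̂. -/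
open MeasureTheory ProbabilityTheory

noncomputable section

/-- The `n`-fold composition of a Markov kernel: `kpow κ 0 = id` (Dirac kernel) and
`kpow κ (n+1) = κ ∘ₖ kpow κ n`, so that
`kpow κ (n+1) x A = ∫ κ y A d(kpow κ n x)(y)`. -/
def kpow {E : Type*} [MeasurableSpace E] (κ : Kernel E E) : ℕ → Kernel E E
  | 0 => Kernel.id
  | n + 1 => κ.comp (kpow κ n)

/-!
If `π̂` is invariant for `κ`, it is invariant for every `κⁿ`, so `π̂(f) = ∫ κⁿ(x)(f) dπ̂(x)`.
Integrating the hypothesis against `π̂` gives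
`|π(f) − π̂(f)| ≤ K (ρⁿ + ε (1 − ρⁿ)/(1 − ρ)) π̂(V)` for every `n`, and `n → ∞` yields the claim.
-/

open Filter Topology

namespace ProbabilityTheory.Kernel

variable {α F : Type*} [MeasurableSpace α] [NormedAddCommGroup F] [NormedSpace ℝ F]
  {κ : Kernel α α} {μ : Measure α}

theorem invariant_of_forall_lintegral_eq
    (h : ∀ A : Set α, MeasurableSet A → ∫⁻ x, κ x A ∂μ = μ A) : κ.Invariant μ := by
  ext A hA
  rw [Measure.bind_apply hA κ.aemeasurable, h A hA]

theorem Invariant.kpow (hκ : κ.Invariant μ) : ∀ n, (kpow κ n).Invariant μ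
  | 0 => Measure.id_comp
  | n + 1 => hκ.comp (hκ.kpow n)

theorem Invariant.integrable_integral (hκ : κ.Invariant μ) {f : α → F} (hf : Integrable f μ) :
    Integrable (fun x ↦ ∫ y, f y ∂κ x) μ := by
  rw [← hκ.def, Measure.comp_eq_comp_const_apply] at hf
  simpa using hf.integral_comp

theorem Invariant.integral_integral (hκ : κ.Invariant μ) {f : α → F} (hf : Integrable f μ) :
    ∫ x, ∫ y, f y ∂κ x ∂μ = ∫ y, f y ∂μ := by
  conv_rhs => rw [← hκ.def, Measure.comp_eq_comp_const_apply]
  rw [← hκ.def, Measure.comp_eq_comp_const_apply] at hf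
  simpa using (integral_comp hf).symm

end ProbabilityTheory.Kernel

theorem abs_sub_integral_le_integral {α : Type*} [MeasurableSpace α] {μ : Measure α}
    [IsProbabilityMeasure μ] {c : ℝ} {g h : α → ℝ} (hg : Integrable g μ) (hh : Integrable h μ)
    (hgh : ∀ x, |c - g x| ≤ h x) : |c - ∫ x, g x ∂μ| ≤ ∫ x, h x ∂μ := by
  have hc : c - ∫ x, g x ∂μ = ∫ x, (c - g x) ∂μ := by
    rw [integral_sub (integrable_const c) hg, integral_const, probReal_univ, one_smul]
  rw [hc]
  exact (abs_integral_le_integral_abs).trans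
    (integral_mono ((integrable_const c).sub hg).abs hh hgh)

theorem tendsto_pow_add_mul_one_sub_pow_div {ρ : ℝ} (hρ : |ρ| < 1) (ε : ℝ) :
    Tendsto (fun n : ℕ ↦ ρ ^ n + ε * (1 - ρ ^ n) / (1 - ρ)) atTop (𝓝 (ε / (1 - ρ))) := by
  have hpow := tendsto_pow_atTop_nhds_zero_of_abs_lt_one hρ
  have hsum := ((tendsto_const_nhds (x := (1 : ℝ))).sub hpow).const_mul ε |>.div_const (1 - ρ)
  simpa using hpow.add hsum

theorem invariant_measure_perturbation_general
    {E : Type*} [MeasurableSpace E]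
    (κ : Kernel E E)
    (πhat : Measure E) [IsProbabilityMeasure πhat]
    (hinv : ∀ A : Set E, MeasurableSet A → ∫⁻ x, κ x A ∂πhat = πhat A)
    (π : Measure E)
    (V : E → ℝ)
    (hVint : Integrable V πhat)
    (f : E → ℝ)
    (hfπhat : Integrable f πhat)
    (K ρ ε : ℝ) (hρ : ρ ∈ Set.Ioo (0 : ℝ) 1)
    (hbound : ∀ (n : ℕ) (x : E),
      |(∫ y, f y ∂π) - ∫ y, f y ∂((kpow κ n) x)|
        ≤ K * (ρ ^ n + ε * (1 - ρ ^ n) / (1 - ρ)) * V x) :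
    |(∫ y, f y ∂π) - ∫ y, f y ∂πhat| ≤ K * ε / (1 - ρ) * ∫ x, V x ∂πhat := by
  have hinvn := (Kernel.invariant_of_forall_lintegral_eq hinv).kpow
  have hlim := ((tendsto_pow_add_mul_one_sub_pow_div
    (abs_lt.2 ⟨by linarith [hρ.1], hρ.2⟩) ε).const_mul K).mul_const (∫ x, V x ∂πhat)
  rw [← mul_div_assoc] at hlim
  refine ge_of_tendsto' hlim fun n ↦ ?_
  rw [← (hinvn n).integral_integral hfπhat, ← integral_const_mul]
  exact abs_sub_integral_le_integral ((hinvn n).integrable_integral hfπhat)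
    (hVint.const_mul _) (hbound n)

/-- perturbation bound for invariant measures of Markov chains: if
`|π(f) − κⁿ(x)(f)| ≤ K(ρⁿ + ε(1−ρⁿ)/(1−ρ))V(x)` for all `n` and `x`, and `π̂` is invariant
for `κ`, then `|π(f) − π̂(f)| ≤ (Kε/(1−ρ)) π̂(V)`. -/
theorem invariant_measure_perturbation
    {E : Type*} [MeasurableSpace E]
    (κ : Kernel E E) [IsMarkovKernel κ]
    (πhat : Measure E) [IsProbabilityMeasure πhat]
    (hinv : ∀ A : Set E, MeasurableSet A → ∫⁻ x, κ x A ∂πhat = πhat A)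
    (π : Measure E) [IsFiniteMeasure π]
    (V : E → ℝ) (hVm : Measurable V) (hV1 : ∀ x, 1 ≤ V x)
    (hVint : Integrable V πhat)
    (f : E → ℝ) (hfm : Measurable f) (hfV : ∀ x, |f x| ≤ V x)
    (hfπ : Integrable f π) (hfπhat : Integrable f πhat)
    (hfκ : ∀ (n : ℕ) (x : E), Integrable f ((kpow κ n) x))
    (K ρ ε : ℝ) (hK : 0 < K) (hρ : ρ ∈ Set.Ioo (0 : ℝ) 1) (hε : 0 ≤ ε)
    (hbound : ∀ (n : ℕ) (x : E),
      |(∫ y, f y ∂π) - ∫ y, f y ∂((kpow κ n) x)|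
        ≤ K * (ρ ^ n + ε * (1 - ρ ^ n) / (1 - ρ)) * V x) :
    |(∫ y, f y ∂π) - ∫ y, f y ∂πhat| ≤ K * ε / (1 - ρ) * ∫ x, V x ∂πhat :=
  invariant_measure_perturbation_general κ πhat hinv π V hVint f hfπhat K ρ ε hρ hbound
end
end
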